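/- Every hedonic game satisfying strong bottom responsiveness and mutuality admits a strong Nash stable partition. -/

import Mathlib

open Finset

abbrev Pref (N : Type*) := N → Finset N → Finset N → Prop

def SPref {N : Type*} (pref : Pref N) (i : N) (S T : Finset N) : Prop :=
  pref i S T ∧ ¬ pref i T S

def IsHedonic {N : Type*} (pref : Pref N) : Prop :=
  (∀ (i : N) (S T : Finset N), i ∈ S → i ∈ T → pref i S T ∨ pref i T S) ∧
  (∀ (i : N) (S T U : Finset N), pref i S T → pref i T U → pref i S U)

section Defs

variable {N : Type*} [DecidableEq N] [Fintype N]

def IsPartition (π : N → Finset N) : Prop :=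
  (∀ i, i ∈ π i) ∧ ∀ i j, j ∈ π i → π j = π i

def Reachable (π π' : N → Finset N) (H : Finset N) : Prop :=
  π' ≠ π ∧ ∀ i j, i ∉ H → j ∉ H → i ≠ j → (π i = π j ↔ π' i = π' j)

def WeaklyBlocks (pref : Pref N) (π : N → Finset N) (S : Finset N) : Prop :=
  (∀ i ∈ S, pref i S (π i)) ∧ ∃ j ∈ S, SPref pref j S (π j)

def StrictCoreStable (pref : Pref N) (π : N → Finset N) : Prop :=
  ∀ S : Finset N, ¬ WeaklyBlocks pref π S

def Blocks (pref : Pref N) (π : N → Finset N) (S : Finset N) : Prop :=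
  S.Nonempty ∧ ∀ i ∈ S, SPref pref i S (π i)

def CoreStable (pref : Pref N) (π : N → Finset N) : Prop :=
  ∀ S : Finset N, ¬ Blocks pref π S

def StrongNashBlocks (pref : Pref N) (π : N → Finset N) (H : Finset N) : Prop :=
  H.Nonempty ∧ ∃ π' : N → Finset N, IsPartition π' ∧ Reachable π π' H ∧
    ∀ i ∈ H, SPref pref i (π' i) (π i)

def StrongNashStable (pref : Pref N) (π : N → Finset N) : Prop :=
  ∀ H : Finset N, ¬ StrongNashBlocks pref π H

def StronglyIndividuallyBlocks (pref : Pref N) (π : N → Finset N) (H : Finset N) : Prop :=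
  H.Nonempty ∧ ∃ π' : N → Finset N, IsPartition π' ∧ Reachable π π' H ∧
    (∀ i ∈ H, SPref pref i (π' i) (π i)) ∧
    ∀ j : N, (∃ i ∈ H, j ∈ π' i) → pref j (π' j) (π j)

def StronglyIndividuallyStable (pref : Pref N) (π : N → Finset N) : Prop :=
  ∀ H : Finset N, ¬ StronglyIndividuallyBlocks pref π H

def WeaklyNashBlocks (pref : Pref N) (π : N → Finset N) (H : Finset N) : Prop :=
  H.Nonempty ∧ ∃ π' : N → Finset N, IsPartition π' ∧ Reachable π π' H ∧
    (∀ i ∈ H, pref i (π' i) (π i)) ∧ ∃ i ∈ H, SPref pref i (π' i) (π i)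

def StrictlyStrongNashStable (pref : Pref N) (π : N → Finset N) : Prop :=
  ∀ H : Finset N, ¬ WeaklyNashBlocks pref π H

def NashStable (pref : Pref N) (π : N → Finset N) : Prop :=
  ∀ (i : N) (T : Finset N), (T = ∅ ∨ ∃ j, π j = T) → i ∉ T →
    ¬ SPref pref i (insert i T) (π i)

def IndividuallyStable (pref : Pref N) (π : N → Finset N) : Prop :=
  ∀ (i : N) (T : Finset N), (T = ∅ ∨ ∃ j, π j = T) → i ∉ T →
    ¬ (SPref pref i (insert i T) (π i) ∧ ∀ j ∈ T, pref j (insert i T) T)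

def ParetoOptimal (pref : Pref N) (π : N → Finset N) : Prop :=
  ∀ π' : N → Finset N, IsPartition π' → (∀ j, pref j (π' j) (π j)) →
    ¬ ∃ i, SPref pref i (π' i) (π i)

def PerfectPartition (pref : Pref N) (π : N → Finset N) : Prop :=
  ∀ (i : N) (S : Finset N), i ∈ S → pref i (π i) S

def ChoiceSets (pref : Pref N) (i : N) (X : Finset N) : Set (Finset N) :=
  {S' | S' ⊆ X ∧ i ∈ S' ∧ ∀ S'' ⊆ X, i ∈ S'' → pref i S' S''}

def TopResponsiveWith (pref : Pref N) (ch : N → Finset N → Finset N) : Prop :=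
  (∀ (i : N) (X : Finset N), i ∈ X → ChoiceSets pref i X = {ch i X}) ∧
  (∀ (i : N) (X Y : Finset N), i ∈ X → i ∈ Y →
      SPref pref i (ch i X) (ch i Y) → SPref pref i X Y) ∧
  (∀ (i : N) (X Y : Finset N), i ∈ X → i ∈ Y →
      ch i X = ch i Y → X ⊂ Y → SPref pref i X Y)

def MutualTop (ch : N → Finset N → Finset N) : Prop :=
  ∀ (i j : N) (X : Finset N), i ∈ X → j ∈ X → (i ∈ ch j X ↔ j ∈ ch i X)

def AvoidSets (pref : Pref N) (i : N) (X : Finset N) : Set (Finset N) :=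
  {S' | S' ⊆ X ∧ i ∈ S' ∧ ∀ S'' ⊆ X, i ∈ S'' → pref i S'' S'}

def BottomResponsive (pref : Pref N) : Prop :=
  (∀ (i : N) (X Y : Finset N), i ∈ X → i ∈ Y →
      (∀ X' ∈ AvoidSets pref i X, ∀ Y' ∈ AvoidSets pref i Y, SPref pref i X' Y') →
      SPref pref i X Y) ∧
  (∀ (i : N) (X Y : Finset N), i ∈ X → i ∈ Y →
      (AvoidSets pref i X ∩ AvoidSets pref i Y).Nonempty → Y.card ≤ X.card → pref i X Y)

def StrongBottomResponsiveWith (pref : Pref N) (av : N → Finset N → Finset N) : Prop :=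
  BottomResponsive pref ∧
    ∀ (i : N) (X : Finset N), i ∈ X → AvoidSets pref i X = {av i X}

def MutualBottom (av : N → Finset N → Finset N) : Prop :=
  ∀ (i j : N) (X : Finset N), i ∈ X → j ∈ X → (i ∈ av j X ↔ j ∈ av i X)

end Defs

/-!
Call a coalition clean if every member's worst subcoalition in it is the member alone. Partition
the players greedily: repeatedly split off a largest clean coalition among those still unassigned,
recording the round in which each player leaves. In a strong Nash deviation every mover must end
up in a clean coalition that is strictly larger than before (strong bottom responsiveness), and by
mutuality the coalitions the movers join are clean as a whole. Among the players of these new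
coalitions take one leaving earliest in the greedy order: her new coalition was available in her
round, so it is no larger than her old one, which is impossible whether she moved or not.
-/

section GreedyPartition

variable {N : Type*}

lemma IsPartition.mem_iff {π : N → Finset N} (hπ : IsPartition π) {i j : N} :
    j ∈ π i ↔ π j = π i :=
  ⟨hπ.2 i j, fun h => h ▸ hπ.1 j⟩

lemma Reachable.eq_iff_eq {π π' : N → Finset N} {H : Finset N} (hr : Reachable π π' H)
    {i j : N} (hi : i ∉ H) (hj : j ∉ H) : π i = π j ↔ π' i = π' j := by
  by_cases hij : i = j
  · simp [hij]
  · exact hr.2 i j hi hj hij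

/-- `π` partitions `R` by rounds `rank`: the block of each player is a largest `P`-coalition among
the players whose round is not earlier than hers. -/
structure IsGreedyPartitionOn (P : Finset N → Prop) (R : Finset N) (π : N → Finset N)
    (rank : N → ℕ) : Prop where
  mem_self : ∀ i ∈ R, i ∈ π i
  subset : ∀ i ∈ R, π i ⊆ R
  eq_of_mem : ∀ i ∈ R, ∀ j ∈ π i, π j = π i
  prop : ∀ i ∈ R, P (π i)
  rank_eq : ∀ i ∈ R, ∀ j ∈ π i, rank j = rank i
  card_le : ∀ i ∈ R, ∀ Y ⊆ R, P Y → (∀ y ∈ Y, rank i ≤ rank y) → #Y ≤ #(π i)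

lemma exists_isGreedyPartitionOn [DecidableEq N] (P : Finset N → Prop) (hP : ∀ i, P {i})
    (R : Finset N) : ∃ π rank, IsGreedyPartitionOn P R π rank := by
  induction R using Finset.strongInduction with
  | H R ih =>
  rcases R.eq_empty_or_nonempty with rfl | ⟨x, hx⟩
  · exact ⟨fun _ => ∅, fun _ => 0, by constructor <;> simp⟩
  classical
  obtain ⟨S, hS, hSmax⟩ := exists_max_image (R.powerset.filter P) card
    ⟨{x}, mem_filter.2 ⟨by simpa using hx, hP x⟩⟩
  rw [mem_filter, mem_powerset] at hS
  have hSne : S.Nonempty :=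
    card_pos.1 (hSmax {x} (mem_filter.2 ⟨by simpa using hx, hP x⟩))
  obtain ⟨π₀, rank₀, h₀⟩ := ih (R \ S) (sdiff_ssubset hS.1 hSne)
  have hnot : ∀ i ∈ R \ S, ∀ j ∈ π₀ i, j ∉ S := fun i hi j hj =>
    (mem_sdiff.1 (h₀.subset i hi hj)).2
  refine ⟨fun i => if i ∈ S then S else π₀ i, fun i => if i ∈ S then 0 else rank₀ i + 1,
    ⟨?_, ?_, ?_, ?_, ?_, ?_⟩⟩
  · intro i hi
    by_cases hiS : i ∈ S
    · simp [hiS]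
    · simpa [hiS] using h₀.mem_self i (mem_sdiff.2 ⟨hi, hiS⟩)
  · intro i hi
    by_cases hiS : i ∈ S
    · simpa [hiS] using hS.1
    · simpa [hiS] using (h₀.subset i (mem_sdiff.2 ⟨hi, hiS⟩)).trans sdiff_subset
  · intro i hi j hj
    by_cases hiS : i ∈ S
    · simp_all
    · have hi' : i ∈ R \ S := mem_sdiff.2 ⟨hi, hiS⟩
      simp only [hiS, if_false] at hj ⊢
      simp [hnot i hi' j hj, h₀.eq_of_mem i hi' j hj]
  · intro i hi
    by_cases hiS : i ∈ S
    · simpa [hiS] using hS.2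
    · simpa [hiS] using h₀.prop i (mem_sdiff.2 ⟨hi, hiS⟩)
  · intro i hi j hj
    by_cases hiS : i ∈ S
    · simp_all
    · have hi' : i ∈ R \ S := mem_sdiff.2 ⟨hi, hiS⟩
      simp only [hiS, if_false] at hj ⊢
      simp [hnot i hi' j hj, h₀.rank_eq i hi' j hj]
  · intro i hi Y hY hPY hrank
    by_cases hiS : i ∈ S
    · simpa [hiS] using hSmax Y (mem_filter.2 ⟨mem_powerset.2 hY, hPY⟩)
    -- A player leaving after round `S` sees only players that also leave after it.
    have hYS : ∀ y ∈ Y, y ∉ S := fun y hy hyS => by simpa [hiS, hyS] using hrank y hy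
    simp only [hiS, if_false]
    refine h₀.card_le i (mem_sdiff.2 ⟨hi, hiS⟩) Y
      (fun y hy => mem_sdiff.2 ⟨hY hy, hYS y hy⟩) hPY fun y hy => ?_
    simpa [hiS, hYS y hy] using hrank y hy

variable {P : Finset N → Prop} {π : N → Finset N} {rank : N → ℕ}

lemma IsGreedyPartitionOn.isPartition [Fintype N] (hπ : IsGreedyPartitionOn P univ π rank) :
    IsPartition π :=
  ⟨fun i => hπ.mem_self i (mem_univ i), fun i => hπ.eq_of_mem i (mem_univ i)⟩

theorem IsGreedyPartitionOn.eq_empty_of_improvement [Fintype N]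
    (hπ : IsGreedyPartitionOn P univ π rank) {π' : N → Finset N} (hπ' : IsPartition π')
    {H : Finset N} (hstay : ∀ i j, i ∉ H → j ∉ H → (π i = π j ↔ π' i = π' j))
    (hH : ∀ h ∈ H, P (π' h) ∧ #(π h) < #(π' h)) : H = ∅ := by
  classical
  by_contra hne
  let U := univ.filter fun j => ∃ h ∈ H, π' j = π' h
  obtain ⟨m, hmU, hmin⟩ := exists_min_image U rank <| by
    obtain ⟨h, hh⟩ := nonempty_iff_ne_empty.2 hne
    exact ⟨h, mem_filter.2 ⟨mem_univ h, h, hh, rfl⟩⟩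
  have hUmin : ∀ x ∈ U, rank x = rank m → #(π' x) ≤ #(π x) := by
    intro x hxU hx
    obtain ⟨h, hh, hxh⟩ := (mem_filter.1 hxU).2
    refine hπ.card_le x (mem_univ x) _ (subset_univ _) (hxh ▸ (hH h hh).1) fun y hy => ?_
    exact hx ▸ hmin y (mem_filter.2 ⟨mem_univ y, h, hh, (hπ'.mem_iff.1 hy).trans hxh⟩)
  have hrank_m : ∀ c ∈ π m, rank c = rank m := hπ.rank_eq m (mem_univ m)
  have hblock_m : ∀ c ∈ π m, c ∉ H := fun c hc hcH =>
    (hUmin c (mem_filter.2 ⟨mem_univ c, c, hcH, rfl⟩) (hrank_m c hc)).not_gt (hH c hcH).2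
  have hmH : m ∉ H := hblock_m m (hπ.mem_self m (mem_univ m))
  obtain ⟨h₁, hh₁, hmh₁⟩ := (mem_filter.1 hmU).2
  have hsub : π m ⊂ π' m := by
    refine (ssubset_iff_of_subset fun c hc => ?_).2 ⟨h₁, ?_, fun hc => hblock_m h₁ hc hh₁⟩
    · exact hπ'.mem_iff.2 <| (hstay c m (hblock_m c hc) hmH).1 (hπ.eq_of_mem m (mem_univ m) c hc)
    · exact hπ'.mem_iff.2 hmh₁.symm
  exact (card_lt_card hsub).not_ge (hUmin m hmU rfl)

end GreedyPartition

section BottomResponsive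

variable {N : Type*} {pref : Pref N} {av : N → Finset N → Finset N}

def IsClean (av : N → Finset N → Finset N) (S : Finset N) : Prop :=
  ∀ i ∈ S, av i S = {i}

variable (hav : ∀ i X, i ∈ X → AvoidSets pref i X = {av i X})
include hav

lemma av_mem_avoidSets {i : N} {X : Finset N} (hi : i ∈ X) : av i X ∈ AvoidSets pref i X := by
  rw [hav i X hi]
  rfl

lemma av_eq_of_av_subset {i : N} {X T : Finset N} (hiX : i ∈ X) (hT : T ⊆ X) (hiT : i ∈ T)
    (hav_sub : av i X ⊆ T) : av i T = av i X := by
  obtain ⟨-, hi, hworst⟩ := av_mem_avoidSets hav hiX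
  have hmem : av i X ∈ AvoidSets pref i T :=
    ⟨hav_sub, hi, fun S hS hiS => hworst S (hS.trans hT) hiS⟩
  rw [hav i T hiT] at hmem
  exact hmem.symm

lemma isClean_singleton (i : N) : IsClean av {i} := by
  intro j hj
  rw [mem_singleton.1 hj]
  obtain ⟨hsub, hi, -⟩ := av_mem_avoidSets hav (mem_singleton_self i)
  exact (Nonempty.subset_singleton_iff ⟨i, hi⟩).1 hsub

lemma IsClean.subset {S T : Finset N} (hS : IsClean av S) (hT : T ⊆ S) : IsClean av T := by
  intro i hi
  rw [av_eq_of_av_subset hav (hT hi) hT hi (by simpa [hS i (hT hi)] using hi), hS i (hT hi)]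

lemma spref_av_of_ne (hG : IsHedonic pref) {i : N} {X S : Finset N} (hi : i ∈ X) (hS : S ⊆ X)
    (hiS : i ∈ S) (hne : S ≠ av i X) : SPref pref i S (av i X) := by
  obtain ⟨-, -, hworst⟩ := av_mem_avoidSets hav hi
  have hnot : S ∉ AvoidSets pref i X := by simpa [hav i X hi] using hne
  obtain ⟨T, hT, hiT, hST⟩ : ∃ T ⊆ X, i ∈ T ∧ ¬ pref i T S := by
    by_contra! hall
    exact hnot ⟨hS, hiS, hall⟩
  have hST' : pref i S T := (hG.1 i S T hiS hiT).resolve_right hST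
  exact ⟨hG.2 i S T _ hST' (hworst T hT hiT), fun h => hST (hG.2 i T _ S (hworst T hT hiT) h)⟩

lemma spref_of_av_eq_singleton (hG : IsHedonic pref) (hBR : BottomResponsive pref) {i : N}
    {X Y : Finset N} (hiX : i ∈ X) (hiY : i ∈ Y) (hX : av i X = {i}) (hY : av i Y ≠ {i}) :
    SPref pref i X Y := by
  refine hBR.1 i X Y hiX hiY fun X' hX' Y' hY' => ?_
  rw [hav i X hiX, Set.mem_singleton_iff] at hX'
  rw [hav i Y hiY, Set.mem_singleton_iff] at hY'
  subst hX' hY'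
  rw [hX]
  exact spref_av_of_ne hav hG hiY (singleton_subset_iff.2 hiY) (mem_singleton_self i) (Ne.symm hY)

lemma pref_of_av_eq_of_card_le (hBR : BottomResponsive pref) {i : N} {X Y : Finset N}
    (hiX : i ∈ X) (hiY : i ∈ Y) (heq : av i X = av i Y) (hcard : #Y ≤ #X) : pref i X Y := by
  refine hBR.2 i X Y hiX hiY ⟨av i X, av_mem_avoidSets hav hiX, ?_⟩ hcard
  rw [heq]
  exact av_mem_avoidSets hav hiY

lemma av_eq_singleton_and_card_lt_of_spref (hG : IsHedonic pref) (hBR : BottomResponsive pref)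
    {i : N} {X Y : Finset N} (hiX : i ∈ X) (hiY : i ∈ Y) (hX : av i X = {i})
    (hYX : SPref pref i Y X) : av i Y = {i} ∧ #X < #Y := by
  have hY : av i Y = {i} := by
    by_contra hY
    exact hYX.2 (spref_of_av_eq_singleton hav hG hBR hiX hiY hX hY).1
  refine ⟨hY, lt_of_not_ge fun hle => hYX.2 ?_⟩
  exact pref_of_av_eq_of_card_le hav hBR hiX hiY (hX.trans hY.symm) hle

/-- By mutuality a non-mover avoids no mover, so her worst subcoalition lies among the players who
stayed with her, inside her old clean coalition. -/
lemma isClean_of_movers_avoid_self [DecidableEq N] (hMut : MutualBottom av)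
    {π π' : N → Finset N} (hπ : IsPartition π) (hclean : ∀ i, IsClean av (π i))
    (hπ' : IsPartition π') {H : Finset N}
    (hstay : ∀ i j, i ∉ H → j ∉ H → (π i = π j ↔ π' i = π' j))
    (hmovers : ∀ h ∈ H, av h (π' h) = {h}) (h : N) : IsClean av (π' h) := by
  intro y hy
  have hyh : π' y = π' h := hπ'.mem_iff.1 hy
  by_cases hyH : y ∈ H
  · exact hyh ▸ hmovers y hyH
  obtain ⟨hav_sub, -, -⟩ := av_mem_avoidSets hav hy
  have hav_stay : av y (π' h) ⊆ π y ∩ π' h := fun z hz => by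
    have hz' : z ∈ π' h := hav_sub hz
    have hzH : z ∉ H := fun hzH => by
      have hyz : y ∈ av z (π' h) := (hMut y z _ hy hz').2 hz
      rw [← hπ'.mem_iff.1 hz', hmovers z hzH, mem_singleton] at hyz
      exact hyH (hyz ▸ hzH)
    have hzy : π z = π y := (hstay z y hzH hyH).2 ((hπ'.mem_iff.1 hz').trans hyh.symm)
    exact mem_inter.2 ⟨hπ.mem_iff.2 hzy, hz'⟩
  have hinter : IsClean av (π y ∩ π' h) := (hclean y).subset hav inter_subset_left
  have hy_inter : y ∈ π y ∩ π' h := mem_inter.2 ⟨hπ.1 y, hy⟩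
  rw [← av_eq_of_av_subset hav hy inter_subset_right hy_inter hav_stay]
  exact hinter y hy_inter

end BottomResponsive

/-- Every hedonic game satisfying strong bottom responsiveness and mutuality admits a
strong Nash stable partition. -/
theorem strongBottomResponsive_mutual_SNS {N : Type*} [DecidableEq N] [Fintype N]
    (pref : Pref N) (hG : IsHedonic pref)
    (h : ∃ av : N → Finset N → Finset N,
      StrongBottomResponsiveWith pref av ∧ MutualBottom av) :
    ∃ π : N → Finset N, IsPartition π ∧ StrongNashStable pref π := by
  obtain ⟨av, ⟨hBR, hav⟩, hMut⟩ := h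
  obtain ⟨π, rank, hgreedy⟩ :=
    exists_isGreedyPartitionOn (IsClean av) (isClean_singleton hav) univ
  have hπ := hgreedy.isPartition
  have hclean : ∀ i, IsClean av (π i) := fun i => hgreedy.prop i (mem_univ i)
  refine ⟨π, hπ, fun H ⟨hH, π', hπ', hreach, himp⟩ => hH.ne_empty ?_⟩
  have hstay : ∀ i j, i ∉ H → j ∉ H → (π i = π j ↔ π' i = π' j) :=
    fun i j => hreach.eq_iff_eq
  have hdev : ∀ h ∈ H, av h (π' h) = {h} ∧ #(π h) < #(π' h) := fun h hh =>
    av_eq_singleton_and_card_lt_of_spref hav hG hBR (hπ.1 h) (hπ'.1 h)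
      (hclean h h (hπ.1 h)) (himp h hh)
  have hclean' : ∀ j, IsClean av (π' j) :=
    isClean_of_movers_avoid_self hav hMut hπ hclean hπ' hstay fun h hh => (hdev h hh).1
  exact hgreedy.eq_empty_of_improvement hπ' hstay fun h hh => ⟨hclean' h, (hdev h hh).2⟩
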